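/- Decomposition for the energy harvesting two-way channel with infinite batteries and α_1, α_2 ∈ [0,1]: the supremum of the sum-throughput over all feasible policies equals the supremum of Σ_{i=1}^{N} R(π_{1,i}, π_{2,i}) over all consumed-power sequences (π_{1,i}, π_{2,i}) satisfying π_{k,i} ≥ 0 and Σ_{n=1}^{i} π_{k,n} ≤ Σ_{n=1}^{i} E_{k,n} for k = 1,2 and all i = 1,…,N, where R is the per-slot sum-rate function. -/
import Mathlib


/-- The per-slot sum-rate of the two-way channel with energy cooperation. -/
noncomputable def perSlotRate (h1 h2 s1 s2 a1 a2 : ℝ) (π1 π2 : ℝ) : ℝ :=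
  sSup {r : ℝ | ∃ d1 d2 : ℝ, 0 ≤ d1 ∧ d1 ≤ π1 ∧ 0 ≤ d2 ∧ d2 ≤ π2 ∧
    r = 1/2 * Real.log (1 + h1 * (π1 - d1 + a2 * d2) / s2)
      + 1/2 * Real.log (1 + h2 * (π2 - d2 + a1 * d1) / s1)}

namespace TWC

noncomputable def rate2 (h1 h2 s1 s2 q1 q2 : ℝ) : ℝ :=
  1/2 * Real.log (1 + h1 * q1 / s2) + 1/2 * Real.log (1 + h2 * q2 / s1)

lemma rate2_mono {h1 h2 s1 s2 q1 q2 M1 M2 : ℝ} (hh1 : 0 < h1) (hh2 : 0 < h2)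
    (hs1 : 0 < s1) (hs2 : 0 < s2) (hq1 : 0 ≤ q1) (hq2 : 0 ≤ q2)
    (h1M : q1 ≤ M1) (h2M : q2 ≤ M2) :
    rate2 h1 h2 s1 s2 q1 q2 ≤ rate2 h1 h2 s1 s2 M1 M2 := by
  unfold rate2
  have e1 : (0:ℝ) < 1 + h1 * q1 / s2 := by positivity
  have e2 : (0:ℝ) < 1 + h2 * q2 / s1 := by positivity
  have l1 : 1 + h1 * q1 / s2 ≤ 1 + h1 * M1 / s2 := by gcongr
  have l2 : 1 + h2 * q2 / s1 ≤ 1 + h2 * M2 / s1 := by gcongr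
  have g1 := Real.log_le_log e1 l1
  have g2 := Real.log_le_log e2 l2
  linarith

def rateSet (h1 h2 s1 s2 a1 a2 π1 π2 : ℝ) : Set ℝ :=
  {r : ℝ | ∃ d1 d2 : ℝ, 0 ≤ d1 ∧ d1 ≤ π1 ∧ 0 ≤ d2 ∧ d2 ≤ π2 ∧
    r = 1/2 * Real.log (1 + h1 * (π1 - d1 + a2 * d2) / s2)
      + 1/2 * Real.log (1 + h2 * (π2 - d2 + a1 * d1) / s1)}

lemma perSlotRate_eq (h1 h2 s1 s2 a1 a2 π1 π2 : ℝ) :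
    perSlotRate h1 h2 s1 s2 a1 a2 π1 π2 = sSup (rateSet h1 h2 s1 s2 a1 a2 π1 π2) := rfl

lemma rateSet_nonempty {h1 h2 s1 s2 a1 a2 π1 π2 : ℝ} (hπ1 : 0 ≤ π1) (hπ2 : 0 ≤ π2) :
    (rateSet h1 h2 s1 s2 a1 a2 π1 π2).Nonempty :=
  ⟨_, 0, 0, le_refl 0, hπ1, le_refl 0, hπ2, rfl⟩

lemma rateSet_ub {h1 h2 s1 s2 a1 a2 π1 π2 : ℝ} (hh1 : 0 < h1) (hh2 : 0 < h2)
    (hs1 : 0 < s1) (hs2 : 0 < s2)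
    (ha1 : 0 ≤ a1) (ha1' : a1 ≤ 1) (ha2 : 0 ≤ a2) (ha2' : a2 ≤ 1)
    (hπ1 : 0 ≤ π1) (hπ2 : 0 ≤ π2) :
    ∀ r ∈ rateSet h1 h2 s1 s2 a1 a2 π1 π2, r ≤ rate2 h1 h2 s1 s2 (π1 + π2) (π1 + π2) := by
  rintro r ⟨d1, d2, hd1, hd1', hd2, hd2', rfl⟩
  have hA : a2 * d2 ≤ d2 := mul_le_of_le_one_left hd2 ha2'
  have hB : 0 ≤ a2 * d2 := mul_nonneg ha2 hd2
  have hC : a1 * d1 ≤ d1 := mul_le_of_le_one_left hd1 ha1'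
  have hD : 0 ≤ a1 * d1 := mul_nonneg ha1 hd1
  exact rate2_mono hh1 hh2 hs1 hs2 (by linarith) (by linarith) (by linarith) (by linarith)

lemma rateSet_bddAbove {h1 h2 s1 s2 a1 a2 π1 π2 : ℝ} (hh1 : 0 < h1) (hh2 : 0 < h2)
    (hs1 : 0 < s1) (hs2 : 0 < s2)
    (ha1 : 0 ≤ a1) (ha1' : a1 ≤ 1) (ha2 : 0 ≤ a2) (ha2' : a2 ≤ 1)
    (hπ1 : 0 ≤ π1) (hπ2 : 0 ≤ π2) :
    BddAbove (rateSet h1 h2 s1 s2 a1 a2 π1 π2) :=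
  ⟨_, fun r hr => rateSet_ub hh1 hh2 hs1 hs2 ha1 ha1' ha2 ha2' hπ1 hπ2 r hr⟩

lemma perSlotRate_le_rate2 {h1 h2 s1 s2 a1 a2 π1 π2 : ℝ} (hh1 : 0 < h1) (hh2 : 0 < h2)
    (hs1 : 0 < s1) (hs2 : 0 < s2)
    (ha1 : 0 ≤ a1) (ha1' : a1 ≤ 1) (ha2 : 0 ≤ a2) (ha2' : a2 ≤ 1)
    (hπ1 : 0 ≤ π1) (hπ2 : 0 ≤ π2) :
    perSlotRate h1 h2 s1 s2 a1 a2 π1 π2 ≤ rate2 h1 h2 s1 s2 (π1 + π2) (π1 + π2) :=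
  csSup_le (rateSet_nonempty hπ1 hπ2) (rateSet_ub hh1 hh2 hs1 hs2 ha1 ha1' ha2 ha2' hπ1 hπ2)

lemma le_perSlotRate {h1 h2 s1 s2 a1 a2 π1 π2 r : ℝ} (hh1 : 0 < h1) (hh2 : 0 < h2)
    (hs1 : 0 < s1) (hs2 : 0 < s2)
    (ha1 : 0 ≤ a1) (ha1' : a1 ≤ 1) (ha2 : 0 ≤ a2) (ha2' : a2 ≤ 1)
    (hπ1 : 0 ≤ π1) (hπ2 : 0 ≤ π2)
    (hr : r ∈ rateSet h1 h2 s1 s2 a1 a2 π1 π2) :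
    r ≤ perSlotRate h1 h2 s1 s2 a1 a2 π1 π2 :=
  le_csSup (rateSet_bddAbove hh1 hh2 hs1 hs2 ha1 ha1' ha2 ha2' hπ1 hπ2) hr


noncomputable def step (a1 a2 e1 e2 q1 q2 g1 g2 : ℝ) (s : ℝ × ℝ × ℝ × ℝ) : ℝ × ℝ × ℝ × ℝ :=
  (s.1 + e1 - (g1 - min g1 s.2.1) + a2 * min g2 s.2.2.2
      - (q1 - min q1 (s.2.1 - min g1 s.2.1 + a2 * (g2 - min g2 s.2.2.2))),
   (s.2.1 - min g1 s.2.1 + a2 * (g2 - min g2 s.2.2.2))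
      - min q1 (s.2.1 - min g1 s.2.1 + a2 * (g2 - min g2 s.2.2.2)),
   s.2.2.1 + e2 - (g2 - min g2 s.2.2.2) + a1 * min g1 s.2.1
      - (q2 - min q2 (s.2.2.2 - min g2 s.2.2.2 + a1 * (g1 - min g1 s.2.1))),
   (s.2.2.2 - min g2 s.2.2.2 + a1 * (g1 - min g1 s.2.1))
      - min q2 (s.2.2.2 - min g2 s.2.2.2 + a1 * (g1 - min g1 s.2.1)))

noncomputable def st (a1 a2 : ℝ) (E1 E2 p1 p2 d1 d2 : ℕ → ℝ) : ℕ → ℝ × ℝ × ℝ × ℝ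
  | 0 => (0, 0, 0, 0)
  | i + 1 => step a1 a2 (E1 i) (E2 i) (p1 i) (p2 i) (d1 i) (d2 i)
      (st a1 a2 E1 E2 p1 p2 d1 d2 i)

variable (a1 a2 : ℝ) (E1 E2 p1 p2 d1 d2 : ℕ → ℝ)

noncomputable def W1 (i : ℕ) : ℝ := (st a1 a2 E1 E2 p1 p2 d1 d2 i).1
noncomputable def F1 (i : ℕ) : ℝ := (st a1 a2 E1 E2 p1 p2 d1 d2 i).2.1
noncomputable def W2 (i : ℕ) : ℝ := (st a1 a2 E1 E2 p1 p2 d1 d2 i).2.2.1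
noncomputable def F2 (i : ℕ) : ℝ := (st a1 a2 E1 E2 p1 p2 d1 d2 i).2.2.2
noncomputable def T1 (i : ℕ) : ℝ := min (d1 i) (F1 a1 a2 E1 E2 p1 p2 d1 d2 i)
noncomputable def T2 (i : ℕ) : ℝ := min (d2 i) (F2 a1 a2 E1 E2 p1 p2 d1 d2 i)
noncomputable def G1 (i : ℕ) : ℝ :=
  F1 a1 a2 E1 E2 p1 p2 d1 d2 i - T1 a1 a2 E1 E2 p1 p2 d1 d2 i
    + a2 * (d2 i - T2 a1 a2 E1 E2 p1 p2 d1 d2 i)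
noncomputable def G2 (i : ℕ) : ℝ :=
  F2 a1 a2 E1 E2 p1 p2 d1 d2 i - T2 a1 a2 E1 E2 p1 p2 d1 d2 i
    + a1 * (d1 i - T1 a1 a2 E1 E2 p1 p2 d1 d2 i)
noncomputable def C1 (i : ℕ) : ℝ := min (p1 i) (G1 a1 a2 E1 E2 p1 p2 d1 d2 i)
noncomputable def C2 (i : ℕ) : ℝ := min (p2 i) (G2 a1 a2 E1 E2 p1 p2 d1 d2 i)
noncomputable def Pi1 (i : ℕ) : ℝ :=
  (p1 i - C1 a1 a2 E1 E2 p1 p2 d1 d2 i) + C2 a1 a2 E1 E2 p1 p2 d1 d2 i / a1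
noncomputable def Pi2 (i : ℕ) : ℝ :=
  (p2 i - C2 a1 a2 E1 E2 p1 p2 d1 d2 i) + C1 a1 a2 E1 E2 p1 p2 d1 d2 i / a2

lemma W1_succ (i : ℕ) : W1 a1 a2 E1 E2 p1 p2 d1 d2 (i+1)
    = W1 a1 a2 E1 E2 p1 p2 d1 d2 i + E1 i - (d1 i - T1 a1 a2 E1 E2 p1 p2 d1 d2 i)
      + a2 * T2 a1 a2 E1 E2 p1 p2 d1 d2 i
      - (p1 i - C1 a1 a2 E1 E2 p1 p2 d1 d2 i) := rfl

lemma F1_succ (i : ℕ) : F1 a1 a2 E1 E2 p1 p2 d1 d2 (i+1)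
    = G1 a1 a2 E1 E2 p1 p2 d1 d2 i - C1 a1 a2 E1 E2 p1 p2 d1 d2 i := rfl

lemma W2_succ (i : ℕ) : W2 a1 a2 E1 E2 p1 p2 d1 d2 (i+1)
    = W2 a1 a2 E1 E2 p1 p2 d1 d2 i + E2 i - (d2 i - T2 a1 a2 E1 E2 p1 p2 d1 d2 i)
      + a1 * T1 a1 a2 E1 E2 p1 p2 d1 d2 i
      - (p2 i - C2 a1 a2 E1 E2 p1 p2 d1 d2 i) := rfl

lemma F2_succ (i : ℕ) : F2 a1 a2 E1 E2 p1 p2 d1 d2 (i+1)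
    = G2 a1 a2 E1 E2 p1 p2 d1 d2 i - C2 a1 a2 E1 E2 p1 p2 d1 d2 i := rfl


lemma step_main {a1 a2 e1 q1 q2 g1 g2 w1 f1 w2 f2 t1 t2 G1 G2 c1 c2 : ℝ}
    (ha1 : 0 ≤ a1) (ha1' : a1 ≤ 1) (ha2 : 0 ≤ a2) (ha2' : a2 ≤ 1)
    (he1 : 0 ≤ e1) (hq1 : 0 ≤ q1) (hq2 : 0 ≤ q2) (hg1 : 0 ≤ g1) (hg2 : 0 ≤ g2)
    (hw1 : 0 ≤ w1) (hf1 : 0 ≤ f1) (hw2 : 0 ≤ w2) (hf2 : 0 ≤ f2)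
    (hz1 : a1 = 0 → f2 = 0) (hz2 : a2 = 0 → f1 = 0)
    (hzero : g1 = 0 ∨ g2 = 0)
    (hfeas1 : q1 + g1 ≤ w1 + f1 + e1 + a2 * g2)
    (ht1 : t1 = min g1 f1) (ht2 : t2 = min g2 f2)
    (hG1 : G1 = f1 - t1 + a2 * (g2 - t2)) (hG2 : G2 = f2 - t2 + a1 * (g1 - t1))
    (hc1 : c1 = min q1 G1) (hc2 : c2 = min q2 G2) :
    0 ≤ w1 + e1 - (g1 - t1) + a2 * t2 - (q1 - c1) ∧
    0 ≤ G1 - c1 ∧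
    (a1 = 0 → G2 - c2 = 0) ∧
    (w1 + e1 - (g1 - t1) + a2 * t2 - (q1 - c1)) + (G1 - c1)
      = (w1 + f1) + (e1 - q1 + a2 * g2 - g1) ∧
    ((q1 - c1) + c2 / a1)
      + ((w1 + e1 - (g1 - t1) + a2 * t2 - (q1 - c1)) + (G2 - c2) / a1)
      ≤ e1 + (w1 + f2 / a1) ∧
    (a2 = 0 → c1 = 0) := by
  have ht1a : 0 ≤ t1 := ht1 ▸ le_min hg1 hf1
  have ht1b : t1 ≤ g1 := ht1 ▸ min_le_left _ _
  have ht1c : t1 ≤ f1 := ht1 ▸ min_le_right _ _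
  have ht2a : 0 ≤ t2 := ht2 ▸ le_min hg2 hf2
  have ht2b : t2 ≤ g2 := ht2 ▸ min_le_left _ _
  have ht2c : t2 ≤ f2 := ht2 ▸ min_le_right _ _
  have hB : 0 ≤ a2 * (g2 - t2) := mul_nonneg ha2 (by linarith)
  have hA : 0 ≤ a2 * t2 := mul_nonneg ha2 ht2a
  have hC : a2 * t2 + a2 * (g2 - t2) = a2 * g2 := by ring
  have hD : a2 * g2 ≤ g2 := mul_le_of_le_one_left hg2 ha2'
  have hG1a : 0 ≤ G1 := by rw [hG1]; linarith
  have hG2a : 0 ≤ G2 := by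
    have : 0 ≤ a1 * (g1 - t1) := mul_nonneg ha1 (by linarith)
    rw [hG2]; linarith
  have hc1a : 0 ≤ c1 := hc1 ▸ le_min hq1 hG1a
  have hc1b : c1 ≤ q1 := hc1 ▸ min_le_left _ _
  have hc1c : c1 ≤ G1 := hc1 ▸ min_le_right _ _
  have hc2a : 0 ≤ c2 := hc2 ▸ le_min hq2 hG2a
  have hc2b : c2 ≤ q2 := hc2 ▸ min_le_left _ _
  have hc2c : c2 ≤ G2 := hc2 ▸ min_le_right _ _
  have h12 : a1 * a2 ≤ 1 := le_trans (mul_le_of_le_one_left ha2 ha1') ha2'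
  -- P3 ingredients
  have P3 : a1 = 0 → G2 - c2 = 0 := by
    intro h0
    have hf20 : f2 = 0 := hz1 h0
    have ht20 : t2 = 0 := by
      have : t2 ≤ 0 := hf20 ▸ ht2c
      linarith
    have hG20 : G2 = 0 := by
      rw [hG2, h0, hf20, ht20]; ring
    have : c2 ≤ 0 := hG20 ▸ hc2c
    linarith
  have P6 : a2 = 0 → c1 = 0 := by
    intro h0
    have hf10 : f1 = 0 := hz2 h0
    have ht10 : t1 = 0 := by
      have : t1 ≤ 0 := hf10 ▸ ht1c
      linarith
    have hG10 : G1 = 0 := by rw [hG1, h0, hf10, ht10]; ring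
    have : c1 ≤ 0 := hG10 ▸ hc1c
    linarith
  refine ⟨?_, by linarith, P3, by rw [hG1]; ring, ?_, P6⟩
  · -- positivity of new own stock at node 1
    have hch1 : t1 = g1 ∨ t1 = f1 := ht1 ▸ min_choice _ _
    have hchc : c1 = q1 ∨ c1 = G1 := hc1 ▸ min_choice _ _
    rcases hzero with h | h <;> rcases hch1 with h' | h' <;> rcases hchc with h'' | h'' <;>
      rw [h''] <;> rw [hG1] at * <;> linarith
  · -- γ₁ invariant step
    by_cases h0 : a1 = 0
    · have hf20 : f2 = 0 := hz1 h0
      have ht20 : t2 = 0 := by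
        have : t2 ≤ 0 := hf20 ▸ ht2c
        linarith
      have hG20 : G2 = 0 := by rw [hG2, h0, hf20, ht20]; ring
      have hc20 : c2 = 0 := by
        have : c2 ≤ 0 := hG20 ▸ hc2c
        linarith
      have ha2t2 : a2 * t2 = 0 := by rw [ht20, mul_zero]
      rw [hf20, hG20, hc20]
      simp only [zero_div, sub_zero, zero_sub, neg_div]
      linarith
    · have ha1pos : 0 < a1 := lt_of_le_of_ne ha1 (Ne.symm h0)
      have hdiv : (G2 - c2) / a1 = f2 / a1 - t2 / a1 + (g1 - t1) - c2 / a1 := by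
        rw [hG2]; field_simp
      have hkey : a2 * t2 ≤ t2 / a1 := by
        rw [le_div_iff₀ ha1pos]
        nlinarith [mul_nonneg (sub_nonneg.2 h12) ht2a]
      rw [hdiv]
      linarith


lemma invar (a1 a2 : ℝ) (E1 E2 p1 p2 d1 d2 : ℕ → ℝ) (N : ℕ)
    (ha10 : 0 ≤ a1) (ha11 : a1 ≤ 1) (ha20 : 0 ≤ a2) (ha21 : a2 ≤ 1)
    (hE : ∀ i < N, 0 ≤ E1 i ∧ 0 ≤ E2 i)
    (hpos : ∀ i < N, 0 ≤ p1 i ∧ 0 ≤ p2 i ∧ 0 ≤ d1 i ∧ 0 ≤ d2 i)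
    (hzero : ∀ i < N, d1 i = 0 ∨ d2 i = 0)
    (hfeas : ∀ i < N,
      0 ≤ ∑ n ∈ Finset.range (i+1), (E1 n - p1 n + a2 * d2 n - d1 n) ∧
      0 ≤ ∑ n ∈ Finset.range (i+1), (E2 n - p2 n + a1 * d1 n - d2 n)) :
    ∀ i, i ≤ N →
      (0 ≤ W1 a1 a2 E1 E2 p1 p2 d1 d2 i ∧ 0 ≤ F1 a1 a2 E1 E2 p1 p2 d1 d2 i ∧ 0 ≤ W2 a1 a2 E1 E2 p1 p2 d1 d2 i ∧ 0 ≤ F2 a1 a2 E1 E2 p1 p2 d1 d2 i) ∧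
      (a1 = 0 → F2 a1 a2 E1 E2 p1 p2 d1 d2 i = 0) ∧ (a2 = 0 → F1 a1 a2 E1 E2 p1 p2 d1 d2 i = 0) ∧
      W1 a1 a2 E1 E2 p1 p2 d1 d2 i + F1 a1 a2 E1 E2 p1 p2 d1 d2 i = (∑ n ∈ Finset.range i, (E1 n - p1 n + a2 * d2 n - d1 n)) ∧
      W2 a1 a2 E1 E2 p1 p2 d1 d2 i + F2 a1 a2 E1 E2 p1 p2 d1 d2 i = (∑ n ∈ Finset.range i, (E2 n - p2 n + a1 * d1 n - d2 n)) ∧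
      (∑ n ∈ Finset.range i, Pi1 a1 a2 E1 E2 p1 p2 d1 d2 n) + (W1 a1 a2 E1 E2 p1 p2 d1 d2 i + F2 a1 a2 E1 E2 p1 p2 d1 d2 i / a1) ≤ (∑ n ∈ Finset.range i, E1 n) ∧
      (∑ n ∈ Finset.range i, Pi2 a1 a2 E1 E2 p1 p2 d1 d2 n) + (W2 a1 a2 E1 E2 p1 p2 d1 d2 i + F1 a1 a2 E1 E2 p1 p2 d1 d2 i / a2) ≤ (∑ n ∈ Finset.range i, E2 n) := by
  intro i
  induction i with
  | zero =>
    intro _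
    simp [W1, F1, W2, F2, st]
  | succ i ih =>
    intro hiN
    have hi : i < N := Nat.lt_of_lt_of_le (Nat.lt_succ_self i) hiN
    obtain ⟨⟨hw1, hf1, hw2, hf2⟩, hz1, hz2, hbat1, hbat2, hg1, hg2⟩ := ih (le_of_lt hi)
    obtain ⟨hp1, hp2, hd1, hd2⟩ := hpos i hi
    obtain ⟨hE1, hE2⟩ := hE i hi
    have hfeas1' : p1 i + d1 i ≤ W1 a1 a2 E1 E2 p1 p2 d1 d2 i + F1 a1 a2 E1 E2 p1 p2 d1 d2 i + E1 i + a2 * d2 i := by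
      have h := (hfeas i hi).1
      rw [Finset.sum_range_succ] at h
      rw [hbat1]
      linarith
    have hfeas2' : p2 i + d2 i ≤ W2 a1 a2 E1 E2 p1 p2 d1 d2 i + F2 a1 a2 E1 E2 p1 p2 d1 d2 i + E2 i + a1 * d1 i := by
      have h := (hfeas i hi).2
      rw [Finset.sum_range_succ] at h
      rw [hbat2]
      linarith
    have m1 := step_main (a1 := a1) (a2 := a2) (e1 := E1 i) (q1 := p1 i) (q2 := p2 i)
      (g1 := d1 i) (g2 := d2 i) (w1 := W1 a1 a2 E1 E2 p1 p2 d1 d2 i) (f1 := F1 a1 a2 E1 E2 p1 p2 d1 d2 i) (w2 := W2 a1 a2 E1 E2 p1 p2 d1 d2 i) (f2 := F2 a1 a2 E1 E2 p1 p2 d1 d2 i)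
      (t1 := T1 a1 a2 E1 E2 p1 p2 d1 d2 i) (t2 := T2 a1 a2 E1 E2 p1 p2 d1 d2 i) (G1 := G1 a1 a2 E1 E2 p1 p2 d1 d2 i) (G2 := G2 a1 a2 E1 E2 p1 p2 d1 d2 i)
      (c1 := C1 a1 a2 E1 E2 p1 p2 d1 d2 i) (c2 := C2 a1 a2 E1 E2 p1 p2 d1 d2 i)
      ha10 ha11 ha20 ha21 hE1 hp1 hp2 hd1 hd2 hw1 hf1 hw2 hf2 hz1 hz2 (hzero i hi)
      hfeas1' rfl rfl rfl rfl rfl rfl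
    have m2 := step_main (a1 := a2) (a2 := a1) (e1 := E2 i) (q1 := p2 i) (q2 := p1 i)
      (g1 := d2 i) (g2 := d1 i) (w1 := W2 a1 a2 E1 E2 p1 p2 d1 d2 i) (f1 := F2 a1 a2 E1 E2 p1 p2 d1 d2 i) (w2 := W1 a1 a2 E1 E2 p1 p2 d1 d2 i) (f2 := F1 a1 a2 E1 E2 p1 p2 d1 d2 i)
      (t1 := T2 a1 a2 E1 E2 p1 p2 d1 d2 i) (t2 := T1 a1 a2 E1 E2 p1 p2 d1 d2 i) (G1 := G2 a1 a2 E1 E2 p1 p2 d1 d2 i) (G2 := G1 a1 a2 E1 E2 p1 p2 d1 d2 i)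
      (c1 := C2 a1 a2 E1 E2 p1 p2 d1 d2 i) (c2 := C1 a1 a2 E1 E2 p1 p2 d1 d2 i)
      ha20 ha21 ha10 ha11 hE2 hp2 hp1 hd2 hd1 hw2 hf2 hw1 hf1 hz2 hz1 (hzero i hi).symm
      hfeas2' rfl rfl rfl rfl rfl rfl
    obtain ⟨m1a, m1b, m1c, m1d, m1e, m1f⟩ := m1
    obtain ⟨m2a, m2b, m2c, m2d, m2e, m2f⟩ := m2
    refine ⟨⟨?_, ?_, ?_, ?_⟩, ?_, ?_, ?_, ?_, ?_, ?_⟩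
    · rw [W1_succ]; exact m1a
    · rw [F1_succ]; exact m1b
    · rw [W2_succ]; exact m2a
    · rw [F2_succ]; exact m2b
    · intro h0; rw [F2_succ]; exact m1c h0
    · intro h0; rw [F1_succ]; exact m2c h0
    · rw [W1_succ, F1_succ, Finset.sum_range_succ, ← hbat1]; linarith [m1d]
    · rw [W2_succ, F2_succ, Finset.sum_range_succ, ← hbat2]; linarith [m2d]
    · rw [W1_succ, F2_succ, Finset.sum_range_succ, Finset.sum_range_succ]
      have hPi : Pi1 a1 a2 E1 E2 p1 p2 d1 d2 i
          = (p1 i - C1 a1 a2 E1 E2 p1 p2 d1 d2 i) + C2 a1 a2 E1 E2 p1 p2 d1 d2 i / a1 := rfl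
      linarith [m1e, hg1, hPi]
    · rw [W2_succ, F1_succ, Finset.sum_range_succ, Finset.sum_range_succ]
      have hPi : Pi2 a1 a2 E1 E2 p1 p2 d1 d2 i
          = (p2 i - C2 a1 a2 E1 E2 p1 p2 d1 d2 i) + C1 a1 a2 E1 E2 p1 p2 d1 d2 i / a2 := rfl
      linarith [m2e, hg2, hPi]

lemma key (h1 h2 s1 s2 a1 a2 : ℝ) (E1 E2 p1 p2 d1 d2 : ℕ → ℝ) (N : ℕ)
    (hh1 : 0 < h1) (hh2 : 0 < h2) (hs1 : 0 < s1) (hs2 : 0 < s2)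
    (ha10 : 0 ≤ a1) (ha11 : a1 ≤ 1) (ha20 : 0 ≤ a2) (ha21 : a2 ≤ 1)
    (hE : ∀ i < N, 0 ≤ E1 i ∧ 0 ≤ E2 i)
    (hpos : ∀ i < N, 0 ≤ p1 i ∧ 0 ≤ p2 i ∧ 0 ≤ d1 i ∧ 0 ≤ d2 i)
    (hzero : ∀ i < N, d1 i = 0 ∨ d2 i = 0)
    (hfeas : ∀ i < N,
      0 ≤ ∑ n ∈ Finset.range (i+1), (E1 n - p1 n + a2 * d2 n - d1 n) ∧
      0 ≤ ∑ n ∈ Finset.range (i+1), (E2 n - p2 n + a1 * d1 n - d2 n)) :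
    ∃ π1 π2 : ℕ → ℝ,
      (∀ i < N, 0 ≤ π1 i ∧ 0 ≤ π2 i) ∧
      (∀ i < N,
        ∑ n ∈ Finset.range (i+1), π1 n ≤ ∑ n ∈ Finset.range (i+1), E1 n ∧
        ∑ n ∈ Finset.range (i+1), π2 n ≤ ∑ n ∈ Finset.range (i+1), E2 n) ∧
      (∀ i < N,
        1/2 * Real.log (1 + h1 * p1 i / s2) + 1/2 * Real.log (1 + h2 * p2 i / s1)
          ≤ perSlotRate h1 h2 s1 s2 a1 a2 (Pi1 a1 a2 E1 E2 p1 p2 d1 d2 i) (Pi2 a1 a2 E1 E2 p1 p2 d1 d2 i)) ∧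
      π1 = Pi1 a1 a2 E1 E2 p1 p2 d1 d2 ∧ π2 = Pi2 a1 a2 E1 E2 p1 p2 d1 d2 := by
  have hinv := invar a1 a2 E1 E2 p1 p2 d1 d2 N ha10 ha11 ha20 ha21 hE hpos hzero hfeas
  -- basic per-slot facts for i < N
  have hfacts : ∀ i < N, 0 ≤ Pi1 a1 a2 E1 E2 p1 p2 d1 d2 i ∧ 0 ≤ Pi2 a1 a2 E1 E2 p1 p2 d1 d2 i ∧
      (p1 i - C1 a1 a2 E1 E2 p1 p2 d1 d2 i) + C2 a1 a2 E1 E2 p1 p2 d1 d2 i / a1 = Pi1 a1 a2 E1 E2 p1 p2 d1 d2 i ∧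
      (p2 i - C2 a1 a2 E1 E2 p1 p2 d1 d2 i) + C1 a1 a2 E1 E2 p1 p2 d1 d2 i / a2 = Pi2 a1 a2 E1 E2 p1 p2 d1 d2 i ∧
      0 ≤ C2 a1 a2 E1 E2 p1 p2 d1 d2 i / a1 ∧ 0 ≤ C1 a1 a2 E1 E2 p1 p2 d1 d2 i / a2 ∧
      0 ≤ p1 i - C1 a1 a2 E1 E2 p1 p2 d1 d2 i ∧ 0 ≤ p2 i - C2 a1 a2 E1 E2 p1 p2 d1 d2 i ∧
      a2 * (C1 a1 a2 E1 E2 p1 p2 d1 d2 i / a2) = C1 a1 a2 E1 E2 p1 p2 d1 d2 i ∧ a1 * (C2 a1 a2 E1 E2 p1 p2 d1 d2 i / a1) = C2 a1 a2 E1 E2 p1 p2 d1 d2 i := by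
    intro i hi
    obtain ⟨⟨hw1, hf1, hw2, hf2⟩, hz1, hz2, _, _, _, _⟩ := hinv i (le_of_lt hi)
    obtain ⟨hp1, hp2, hd1, hd2⟩ := hpos i hi
    have hT1a : 0 ≤ T1 a1 a2 E1 E2 p1 p2 d1 d2 i := le_min hd1 hf1
    have hT1c : T1 a1 a2 E1 E2 p1 p2 d1 d2 i ≤ F1 a1 a2 E1 E2 p1 p2 d1 d2 i := min_le_right _ _
    have hT2a : 0 ≤ T2 a1 a2 E1 E2 p1 p2 d1 d2 i := le_min hd2 hf2
    have hT2b : T2 a1 a2 E1 E2 p1 p2 d1 d2 i ≤ d2 i := min_le_left _ _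
    have hT2c : T2 a1 a2 E1 E2 p1 p2 d1 d2 i ≤ F2 a1 a2 E1 E2 p1 p2 d1 d2 i := min_le_right _ _
    have hT1b : T1 a1 a2 E1 E2 p1 p2 d1 d2 i ≤ d1 i := min_le_left _ _
    have hG1a : 0 ≤ G1 a1 a2 E1 E2 p1 p2 d1 d2 i := by
      have : 0 ≤ a2 * (d2 i - T2 a1 a2 E1 E2 p1 p2 d1 d2 i) := mul_nonneg ha20 (by linarith)
      have hG : G1 a1 a2 E1 E2 p1 p2 d1 d2 i = F1 a1 a2 E1 E2 p1 p2 d1 d2 i - T1 a1 a2 E1 E2 p1 p2 d1 d2 i + a2 * (d2 i - T2 a1 a2 E1 E2 p1 p2 d1 d2 i) := rfl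
      linarith
    have hG2a : 0 ≤ G2 a1 a2 E1 E2 p1 p2 d1 d2 i := by
      have : 0 ≤ a1 * (d1 i - T1 a1 a2 E1 E2 p1 p2 d1 d2 i) := mul_nonneg ha10 (by linarith)
      have hG : G2 a1 a2 E1 E2 p1 p2 d1 d2 i = F2 a1 a2 E1 E2 p1 p2 d1 d2 i - T2 a1 a2 E1 E2 p1 p2 d1 d2 i + a1 * (d1 i - T1 a1 a2 E1 E2 p1 p2 d1 d2 i) := rfl
      linarith
    have hC1a : 0 ≤ C1 a1 a2 E1 E2 p1 p2 d1 d2 i := le_min hp1 hG1a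
    have hC1b : C1 a1 a2 E1 E2 p1 p2 d1 d2 i ≤ p1 i := min_le_left _ _
    have hC2a : 0 ≤ C2 a1 a2 E1 E2 p1 p2 d1 d2 i := le_min hp2 hG2a
    have hC2b : C2 a1 a2 E1 E2 p1 p2 d1 d2 i ≤ p2 i := min_le_left _ _
    have hC1z : a2 = 0 → C1 a1 a2 E1 E2 p1 p2 d1 d2 i = 0 := by
      intro h0
      have hf10 : F1 a1 a2 E1 E2 p1 p2 d1 d2 i = 0 := hz2 h0
      have hT10 : T1 a1 a2 E1 E2 p1 p2 d1 d2 i = 0 := by rw [hf10] at hT1c; linarith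
      have hG10 : G1 a1 a2 E1 E2 p1 p2 d1 d2 i = 0 := by
        have hG : G1 a1 a2 E1 E2 p1 p2 d1 d2 i = F1 a1 a2 E1 E2 p1 p2 d1 d2 i - T1 a1 a2 E1 E2 p1 p2 d1 d2 i + a2 * (d2 i - T2 a1 a2 E1 E2 p1 p2 d1 d2 i) := rfl
        rw [hG, hf10, hT10, h0]; ring
      have : C1 a1 a2 E1 E2 p1 p2 d1 d2 i ≤ 0 := hG10 ▸ (min_le_right _ _)
      linarith
    have hC2z : a1 = 0 → C2 a1 a2 E1 E2 p1 p2 d1 d2 i = 0 := by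
      intro h0
      have hf20 : F2 a1 a2 E1 E2 p1 p2 d1 d2 i = 0 := hz1 h0
      have hT20 : T2 a1 a2 E1 E2 p1 p2 d1 d2 i = 0 := by rw [hf20] at hT2c; linarith
      have hG20 : G2 a1 a2 E1 E2 p1 p2 d1 d2 i = 0 := by
        have hG : G2 a1 a2 E1 E2 p1 p2 d1 d2 i = F2 a1 a2 E1 E2 p1 p2 d1 d2 i - T2 a1 a2 E1 E2 p1 p2 d1 d2 i + a1 * (d1 i - T1 a1 a2 E1 E2 p1 p2 d1 d2 i) := rfl
        rw [hG, hf20, hT20, h0]; ring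
      have : C2 a1 a2 E1 E2 p1 p2 d1 d2 i ≤ 0 := hG20 ▸ (min_le_right _ _)
      linarith
    have hm1 : a2 * (C1 a1 a2 E1 E2 p1 p2 d1 d2 i / a2) = C1 a1 a2 E1 E2 p1 p2 d1 d2 i := by
      by_cases h0 : a2 = 0
      · rw [hC1z h0]; simp
      · rw [mul_comm]; exact div_mul_cancel₀ _ h0
    have hm2 : a1 * (C2 a1 a2 E1 E2 p1 p2 d1 d2 i / a1) = C2 a1 a2 E1 E2 p1 p2 d1 d2 i := by
      by_cases h0 : a1 = 0
      · rw [hC2z h0]; simp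
      · rw [mul_comm]; exact div_mul_cancel₀ _ h0
    have hdv1 : 0 ≤ C2 a1 a2 E1 E2 p1 p2 d1 d2 i / a1 := div_nonneg hC2a ha10
    have hdv2 : 0 ≤ C1 a1 a2 E1 E2 p1 p2 d1 d2 i / a2 := div_nonneg hC1a ha20
    exact ⟨by have : Pi1 a1 a2 E1 E2 p1 p2 d1 d2 i = (p1 i - C1 a1 a2 E1 E2 p1 p2 d1 d2 i) + C2 a1 a2 E1 E2 p1 p2 d1 d2 i / a1 := rfl; linarith,
      by have : Pi2 a1 a2 E1 E2 p1 p2 d1 d2 i = (p2 i - C2 a1 a2 E1 E2 p1 p2 d1 d2 i) + C1 a1 a2 E1 E2 p1 p2 d1 d2 i / a2 := rfl; linarith,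
      rfl, rfl, hdv1, hdv2, by linarith, by linarith, hm1, hm2⟩
  refine ⟨Pi1 a1 a2 E1 E2 p1 p2 d1 d2, Pi2 a1 a2 E1 E2 p1 p2 d1 d2, ?_, ?_, ?_, rfl, rfl⟩
  · intro i hi
    exact ⟨(hfacts i hi).1, (hfacts i hi).2.1⟩
  · intro i hi
    obtain ⟨⟨hw1, hf1, hw2, hf2⟩, hz1, hz2, _, _, hcum1, hcum2⟩ := hinv (i+1) (Nat.succ_le_of_lt hi)
    have hd1 : 0 ≤ F2 a1 a2 E1 E2 p1 p2 d1 d2 (i+1) / a1 := div_nonneg hf2 ha10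
    have hd2 : 0 ≤ F1 a1 a2 E1 E2 p1 p2 d1 d2 (i+1) / a2 := div_nonneg hf1 ha20
    exact ⟨by linarith, by linarith⟩
  · intro i hi
    obtain ⟨hπ1, hπ2, hPe1, hPe2, hdv1, hdv2, hs1', hs2', hm1, hm2⟩ := hfacts i hi
    have hq1 : Pi1 a1 a2 E1 E2 p1 p2 d1 d2 i - C2 a1 a2 E1 E2 p1 p2 d1 d2 i / a1 + a2 * (C1 a1 a2 E1 E2 p1 p2 d1 d2 i / a2) = p1 i := by
      rw [hm1]; linarith
    have hq2 : Pi2 a1 a2 E1 E2 p1 p2 d1 d2 i - C1 a1 a2 E1 E2 p1 p2 d1 d2 i / a2 + a1 * (C2 a1 a2 E1 E2 p1 p2 d1 d2 i / a1) = p2 i := by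
      rw [hm2]; linarith
    refine le_perSlotRate hh1 hh2 hs1 hs2 ha10 ha11 ha20 ha21 hπ1 hπ2
      ⟨C2 a1 a2 E1 E2 p1 p2 d1 d2 i / a1, C1 a1 a2 E1 E2 p1 p2 d1 d2 i / a2, hdv1, by linarith, hdv2, by linarith, ?_⟩
    rw [hq1, hq2]


end TWC

open TWC

/-- Decomposition of the two-way channel sum-throughput
maximization into consumed-power allocation and per-slot energy transfer. -/
theorem stmt_6
    (N : ℕ) (E1 E2 : ℕ → ℝ) (h1 h2 s1 s2 a1 a2 : ℝ)
    (hh1 : 0 < h1) (hh2 : 0 < h2) (hs1 : 0 < s1) (hs2 : 0 < s2)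
    (ha1 : a1 ∈ Set.Icc (0:ℝ) 1) (ha2 : a2 ∈ Set.Icc (0:ℝ) 1)
    (hE : ∀ i < N, 0 ≤ E1 i ∧ 0 ≤ E2 i) :
    sSup {t : ℝ | ∃ p1 p2 d1 d2 : ℕ → ℝ,
        (∀ i < N, 0 ≤ p1 i ∧ 0 ≤ p2 i ∧ 0 ≤ d1 i ∧ 0 ≤ d2 i) ∧
        (∀ i < N,
          0 ≤ ∑ n ∈ Finset.range (i+1), (E1 n - p1 n + a2 * d2 n - d1 n) ∧
          0 ≤ ∑ n ∈ Finset.range (i+1), (E2 n - p2 n + a1 * d1 n - d2 n)) ∧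
        t = ∑ i ∈ Finset.range N,
          (1/2 * Real.log (1 + h1 * p1 i / s2)
            + 1/2 * Real.log (1 + h2 * p2 i / s1))}
    = sSup {t : ℝ | ∃ π1 π2 : ℕ → ℝ,
        (∀ i < N, 0 ≤ π1 i ∧ 0 ≤ π2 i) ∧
        (∀ i < N,
          ∑ n ∈ Finset.range (i+1), π1 n ≤ ∑ n ∈ Finset.range (i+1), E1 n ∧
          ∑ n ∈ Finset.range (i+1), π2 n ≤ ∑ n ∈ Finset.range (i+1), E2 n) ∧
        t = ∑ i ∈ Finset.range N, perSlotRate h1 h2 s1 s2 a1 a2 (π1 i) (π2 i)} := by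
  obtain ⟨ha10, ha11⟩ := ha1
  obtain ⟨ha20, ha21⟩ := ha2
  set T : ℝ := ∑ n ∈ Finset.range N, (E1 n + E2 n) with hTdef
  have hT0 : 0 ≤ T := Finset.sum_nonneg fun n hn => by
    obtain ⟨u, v⟩ := hE n (Finset.mem_range.1 hn); linarith
  set C : ℝ := rate2 h1 h2 s1 s2 (2*T) (2*T) with hCdef
  have hTbound : ∀ i, i < N →
      (∑ n ∈ Finset.range (i+1), E1 n) ≤ T ∧ (∑ n ∈ Finset.range (i+1), E2 n) ≤ T := by
    intro i hi
    have hsub : Finset.range (i+1) ⊆ Finset.range N := Finset.range_subset_range.2 (Nat.succ_le_of_lt hi)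
    constructor
    · have e1 : (∑ n ∈ Finset.range (i+1), E1 n) ≤ ∑ n ∈ Finset.range N, E1 n :=
        Finset.sum_le_sum_of_subset_of_nonneg hsub
          (fun n hn _ => (hE n (Finset.mem_range.1 hn)).1)
      have e2 : (∑ n ∈ Finset.range N, E1 n) ≤ T := by
        rw [hTdef, Finset.sum_add_distrib]
        have : 0 ≤ ∑ n ∈ Finset.range N, E2 n :=
          Finset.sum_nonneg fun n hn => (hE n (Finset.mem_range.1 hn)).2
        linarith
      linarith
    · have e1 : (∑ n ∈ Finset.range (i+1), E2 n) ≤ ∑ n ∈ Finset.range N, E2 n :=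
        Finset.sum_le_sum_of_subset_of_nonneg hsub
          (fun n hn _ => (hE n (Finset.mem_range.1 hn)).2)
      have e2 : (∑ n ∈ Finset.range N, E2 n) ≤ T := by
        rw [hTdef, Finset.sum_add_distrib]
        have : 0 ≤ ∑ n ∈ Finset.range N, E1 n :=
          Finset.sum_nonneg fun n hn => (hE n (Finset.mem_range.1 hn)).1
        linarith
      linarith
  -- bounded above: the A set
  have hAbdd : ∀ (p1 p2 d1 d2 : ℕ → ℝ),
      (∀ i < N, 0 ≤ p1 i ∧ 0 ≤ p2 i ∧ 0 ≤ d1 i ∧ 0 ≤ d2 i) →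
      (∀ i < N,
        0 ≤ ∑ n ∈ Finset.range (i+1), (E1 n - p1 n + a2 * d2 n - d1 n) ∧
        0 ≤ ∑ n ∈ Finset.range (i+1), (E2 n - p2 n + a1 * d1 n - d2 n)) →
      (∑ i ∈ Finset.range N,
        (1/2 * Real.log (1 + h1 * p1 i / s2)
          + 1/2 * Real.log (1 + h2 * p2 i / s1))) ≤ N * C := by
    intro p1 p2 d1 d2 hpos hfeas
    have hslot : ∀ i ∈ Finset.range N,
        (1/2 * Real.log (1 + h1 * p1 i / s2) + 1/2 * Real.log (1 + h2 * p2 i / s1)) ≤ C := by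
      intro i hi'
      have hi : i < N := Finset.mem_range.1 hi'
      have hsum : (∑ n ∈ Finset.range (i+1), (p1 n + p2 n))
          ≤ ∑ n ∈ Finset.range (i+1), (E1 n + E2 n) := by
        have h := add_nonneg (hfeas i hi).1 (hfeas i hi).2
        rw [← Finset.sum_add_distrib] at h
        have key : (∑ n ∈ Finset.range (i+1),
            ((E1 n - p1 n + a2 * d2 n - d1 n) + (E2 n - p2 n + a1 * d1 n - d2 n)))
            ≤ ∑ n ∈ Finset.range (i+1), ((E1 n + E2 n) - (p1 n + p2 n)) := by
          refine Finset.sum_le_sum fun n hn => ?_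
          have hn' : n < N := Nat.lt_of_lt_of_le (Finset.mem_range.1 hn) hi
          obtain ⟨q1, q2, q3, q4⟩ := hpos n hn'
          have l1 : a1 * d1 n ≤ d1 n := mul_le_of_le_one_left q3 ha11
          have l2 : a2 * d2 n ≤ d2 n := mul_le_of_le_one_left q4 ha21
          linarith
        rw [Finset.sum_sub_distrib] at key
        linarith
      have hsingle : p1 i + p2 i ≤ ∑ n ∈ Finset.range (i+1), (p1 n + p2 n) := by
        refine Finset.single_le_sum (f := fun n => p1 n + p2 n) ?_ ?_
        · intro n hn
          have hn' : n < N := Nat.lt_of_lt_of_le (Finset.mem_range.1 hn) hi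
          obtain ⟨q1, q2, _, _⟩ := hpos n hn'
          exact add_nonneg q1 q2
        · exact Finset.self_mem_range_succ i
      have hEE : (∑ n ∈ Finset.range (i+1), (E1 n + E2 n)) ≤ 2 * T := by
        rw [Finset.sum_add_distrib]
        obtain ⟨u, v⟩ := hTbound i hi
        linarith
      obtain ⟨q1, q2, _, _⟩ := hpos i hi
      exact rate2_mono hh1 hh2 hs1 hs2 q1 q2 (by linarith) (by linarith)
    calc (∑ i ∈ Finset.range N,
        (1/2 * Real.log (1 + h1 * p1 i / s2) + 1/2 * Real.log (1 + h2 * p2 i / s1)))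
        ≤ ∑ _i ∈ Finset.range N, C := Finset.sum_le_sum hslot
      _ = N * C := by rw [Finset.sum_const, Finset.card_range, nsmul_eq_mul]
  have hBbdd : ∀ (π1 π2 : ℕ → ℝ),
      (∀ i < N, 0 ≤ π1 i ∧ 0 ≤ π2 i) →
      (∀ i < N,
        ∑ n ∈ Finset.range (i+1), π1 n ≤ ∑ n ∈ Finset.range (i+1), E1 n ∧
        ∑ n ∈ Finset.range (i+1), π2 n ≤ ∑ n ∈ Finset.range (i+1), E2 n) →
      (∑ i ∈ Finset.range N, perSlotRate h1 h2 s1 s2 a1 a2 (π1 i) (π2 i)) ≤ N * C := by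
    intro π1 π2 hπpos hπcum
    have hslot : ∀ i ∈ Finset.range N,
        perSlotRate h1 h2 s1 s2 a1 a2 (π1 i) (π2 i) ≤ C := by
      intro i hi'
      have hi : i < N := Finset.mem_range.1 hi'
      have hb1 : π1 i ≤ T := by
        have hsingle : π1 i ≤ ∑ n ∈ Finset.range (i+1), π1 n := by
          refine Finset.single_le_sum (f := fun n => π1 n) ?_ (Finset.self_mem_range_succ i)
          intro n hn
          exact (hπpos n (Nat.lt_of_lt_of_le (Finset.mem_range.1 hn) hi)).1
        have := (hπcum i hi).1
        have := (hTbound i hi).1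
        linarith
      have hb2 : π2 i ≤ T := by
        have hsingle : π2 i ≤ ∑ n ∈ Finset.range (i+1), π2 n := by
          refine Finset.single_le_sum (f := fun n => π2 n) ?_ (Finset.self_mem_range_succ i)
          intro n hn
          exact (hπpos n (Nat.lt_of_lt_of_le (Finset.mem_range.1 hn) hi)).2
        have := (hπcum i hi).2
        have := (hTbound i hi).2
        linarith
      obtain ⟨q1, q2⟩ := hπpos i hi
      have step1 : perSlotRate h1 h2 s1 s2 a1 a2 (π1 i) (π2 i)
          ≤ rate2 h1 h2 s1 s2 (π1 i + π2 i) (π1 i + π2 i) :=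
        perSlotRate_le_rate2 hh1 hh2 hs1 hs2 ha10 ha11 ha20 ha21 q1 q2
      have step2 : rate2 h1 h2 s1 s2 (π1 i + π2 i) (π1 i + π2 i) ≤ C :=
        rate2_mono hh1 hh2 hs1 hs2 (by linarith) (by linarith) (by linarith) (by linarith)
      linarith
    calc (∑ i ∈ Finset.range N, perSlotRate h1 h2 s1 s2 a1 a2 (π1 i) (π2 i))
        ≤ ∑ _i ∈ Finset.range N, C := Finset.sum_le_sum hslot
      _ = N * C := by rw [Finset.sum_const, Finset.card_range, nsmul_eq_mul]
  have hAne : ∃ t : ℝ, ∃ p1 p2 d1 d2 : ℕ → ℝ,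
      (∀ i < N, 0 ≤ p1 i ∧ 0 ≤ p2 i ∧ 0 ≤ d1 i ∧ 0 ≤ d2 i) ∧
      (∀ i < N,
        0 ≤ ∑ n ∈ Finset.range (i+1), (E1 n - p1 n + a2 * d2 n - d1 n) ∧
        0 ≤ ∑ n ∈ Finset.range (i+1), (E2 n - p2 n + a1 * d1 n - d2 n)) ∧
      t = ∑ i ∈ Finset.range N,
        (1/2 * Real.log (1 + h1 * p1 i / s2) + 1/2 * Real.log (1 + h2 * p2 i / s1)) := by
    refine ⟨_, fun _ => 0, fun _ => 0, fun _ => 0, fun _ => 0, ?_, ?_, rfl⟩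
    · intro i _; norm_num
    · intro i hi
      constructor
      · refine Finset.sum_nonneg fun n hn => ?_
        have hn' : n < N := Nat.lt_of_lt_of_le (Finset.mem_range.1 hn) hi
        have := (hE n hn').1; simpa using this
      · refine Finset.sum_nonneg fun n hn => ?_
        have hn' : n < N := Nat.lt_of_lt_of_le (Finset.mem_range.1 hn) hi
        have := (hE n hn').2; simpa using this
  have hBne : ∃ t : ℝ, ∃ π1 π2 : ℕ → ℝ,
      (∀ i < N, 0 ≤ π1 i ∧ 0 ≤ π2 i) ∧
      (∀ i < N,
        ∑ n ∈ Finset.range (i+1), π1 n ≤ ∑ n ∈ Finset.range (i+1), E1 n ∧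
        ∑ n ∈ Finset.range (i+1), π2 n ≤ ∑ n ∈ Finset.range (i+1), E2 n) ∧
      t = ∑ i ∈ Finset.range N, perSlotRate h1 h2 s1 s2 a1 a2 (π1 i) (π2 i) := by
    refine ⟨_, fun _ => 0, fun _ => 0, ?_, ?_, rfl⟩
    · intro i _; norm_num
    · intro i hi
      constructor
      · have : (0:ℝ) ≤ ∑ n ∈ Finset.range (i+1), E1 n := by
          refine Finset.sum_nonneg fun n hn => ?_
          exact (hE n (Nat.lt_of_lt_of_le (Finset.mem_range.1 hn) hi)).1
        simpa using this
      · have : (0:ℝ) ≤ ∑ n ∈ Finset.range (i+1), E2 n := by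
          refine Finset.sum_nonneg fun n hn => ?_
          exact (hE n (Nat.lt_of_lt_of_le (Finset.mem_range.1 hn) hi)).2
        simpa using this
  apply le_antisymm
  · -- A ≤ B
    refine csSup_le hAne ?_
    rintro t ⟨p1, p2, d1, d2, hpos, hfeas, rfl⟩
    set d1' : ℕ → ℝ := fun i => d1 i - min (d1 i) (d2 i) with hd1'
    set d2' : ℕ → ℝ := fun i => d2 i - min (d1 i) (d2 i) with hd2'
    have hpos' : ∀ i < N, 0 ≤ p1 i ∧ 0 ≤ p2 i ∧ 0 ≤ d1' i ∧ 0 ≤ d2' i := by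
      intro i hi
      obtain ⟨q1, q2, q3, q4⟩ := hpos i hi
      refine ⟨q1, q2, ?_, ?_⟩
      · simp only [hd1']; have := min_le_left (d1 i) (d2 i); linarith
      · simp only [hd2']; have := min_le_right (d1 i) (d2 i); linarith
    have hzero' : ∀ i < N, d1' i = 0 ∨ d2' i = 0 := by
      intro i _
      rcases le_total (d1 i) (d2 i) with h | h
      · left; simp only [hd1', min_eq_left h]; ring
      · right; simp only [hd2', min_eq_right h]; ring
    have hfeas' : ∀ i < N,
        0 ≤ ∑ n ∈ Finset.range (i+1), (E1 n - p1 n + a2 * d2' n - d1' n) ∧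
        0 ≤ ∑ n ∈ Finset.range (i+1), (E2 n - p2 n + a1 * d1' n - d2' n) := by
      intro i hi
      obtain ⟨u1, u2⟩ := hfeas i hi
      constructor
      · refine le_trans u1 (Finset.sum_le_sum fun n hn => ?_)
        have hn' : n < N := Nat.lt_of_lt_of_le (Finset.mem_range.1 hn) hi
        obtain ⟨_, _, q3, q4⟩ := hpos n hn'
        have hm : 0 ≤ min (d1 n) (d2 n) := le_min q3 q4
        have e1 : a2 * d2' n = a2 * d2 n - a2 * min (d1 n) (d2 n) := by
          simp only [hd2']; ring
        have e2 : a2 * min (d1 n) (d2 n) ≤ min (d1 n) (d2 n) :=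
          mul_le_of_le_one_left hm ha21
        simp only [hd1']
        linarith
      · refine le_trans u2 (Finset.sum_le_sum fun n hn => ?_)
        have hn' : n < N := Nat.lt_of_lt_of_le (Finset.mem_range.1 hn) hi
        obtain ⟨_, _, q3, q4⟩ := hpos n hn'
        have hm : 0 ≤ min (d1 n) (d2 n) := le_min q3 q4
        have e1 : a1 * d1' n = a1 * d1 n - a1 * min (d1 n) (d2 n) := by
          simp only [hd1']; ring
        have e2 : a1 * min (d1 n) (d2 n) ≤ min (d1 n) (d2 n) :=
          mul_le_of_le_one_left hm ha11
        simp only [hd2']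
        linarith
    obtain ⟨π1, π2, hπpos, hπcum, hrate, hπ1e, hπ2e⟩ :=
      key h1 h2 s1 s2 a1 a2 E1 E2 p1 p2 d1' d2' N hh1 hh2 hs1 hs2
        ha10 ha11 ha20 ha21 hE hpos' hzero' hfeas'
    rw [← hπ1e, ← hπ2e] at hrate
    have hmemB : (∑ i ∈ Finset.range N, perSlotRate h1 h2 s1 s2 a1 a2 (π1 i) (π2 i)) ∈
        {t : ℝ | ∃ π1 π2 : ℕ → ℝ,
          (∀ i < N, 0 ≤ π1 i ∧ 0 ≤ π2 i) ∧
          (∀ i < N,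
            ∑ n ∈ Finset.range (i+1), π1 n ≤ ∑ n ∈ Finset.range (i+1), E1 n ∧
            ∑ n ∈ Finset.range (i+1), π2 n ≤ ∑ n ∈ Finset.range (i+1), E2 n) ∧
          t = ∑ i ∈ Finset.range N, perSlotRate h1 h2 s1 s2 a1 a2 (π1 i) (π2 i)} :=
      ⟨π1, π2, hπpos, hπcum, rfl⟩
    have hle : (∑ i ∈ Finset.range N,
        (1/2 * Real.log (1 + h1 * p1 i / s2) + 1/2 * Real.log (1 + h2 * p2 i / s1)))
        ≤ ∑ i ∈ Finset.range N, perSlotRate h1 h2 s1 s2 a1 a2 (π1 i) (π2 i) :=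
      Finset.sum_le_sum fun i hi => hrate i (Finset.mem_range.1 hi)
    refine le_trans hle (le_csSup ⟨N * C, ?_⟩ hmemB)
    rintro x ⟨π1', π2', hπpos', hπcum', rfl⟩
    exact hBbdd π1' π2' hπpos' hπcum'
  · -- B ≤ A
    refine csSup_le hBne ?_
    rintro t ⟨π1, π2, hπpos, hπcum, rfl⟩
    refine le_of_forall_pos_le_add ?_
    intro ε hε
    have hch : ∀ i, ∃ dd : ℝ × ℝ, i < N →
        (0 ≤ dd.1 ∧ dd.1 ≤ π1 i ∧ 0 ≤ dd.2 ∧ dd.2 ≤ π2 i ∧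
         perSlotRate h1 h2 s1 s2 a1 a2 (π1 i) (π2 i)
           ≤ 1/2 * Real.log (1 + h1 * (π1 i - dd.1 + a2 * dd.2) / s2)
             + 1/2 * Real.log (1 + h2 * (π2 i - dd.2 + a1 * dd.1) / s1) + ε / N) := by
      intro i
      by_cases hi : i < N
      · obtain ⟨q1, q2⟩ := hπpos i hi
        have hN0 : (0:ℝ) < (N:ℝ) := by
          have : 0 < N := Nat.lt_of_le_of_lt (Nat.zero_le i) hi
          exact_mod_cast this
        have hεN : 0 < ε / N := div_pos hε hN0
        have hlt : perSlotRate h1 h2 s1 s2 a1 a2 (π1 i) (π2 i) - ε / N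
            < sSup (rateSet h1 h2 s1 s2 a1 a2 (π1 i) (π2 i)) := by
          rw [← perSlotRate_eq]; linarith
        obtain ⟨r, hrmem, hrlt⟩ :=
          exists_lt_of_lt_csSup (rateSet_nonempty q1 q2) hlt
        obtain ⟨u, v, hu0, hu1, hv0, hv1, rfl⟩ := hrmem
        exact ⟨(u, v), fun _ => ⟨hu0, hu1, hv0, hv1, by linarith⟩⟩
      · exact ⟨(0, 0), fun h => absurd h hi⟩
    choose dd hdd using hch
    set P1 : ℕ → ℝ := fun i => if i < N then π1 i - (dd i).1 + a2 * (dd i).2 else 0 with hP1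
    set P2 : ℕ → ℝ := fun i => if i < N then π2 i - (dd i).2 + a1 * (dd i).1 else 0 with hP2
    set D1 : ℕ → ℝ := fun i => if i < N then (dd i).1 else 0 with hD1
    set D2 : ℕ → ℝ := fun i => if i < N then (dd i).2 else 0 with hD2
    have hmemA : (∑ i ∈ Finset.range N,
        (1/2 * Real.log (1 + h1 * P1 i / s2) + 1/2 * Real.log (1 + h2 * P2 i / s1))) ∈
        {t : ℝ | ∃ p1 p2 d1 d2 : ℕ → ℝ,
          (∀ i < N, 0 ≤ p1 i ∧ 0 ≤ p2 i ∧ 0 ≤ d1 i ∧ 0 ≤ d2 i) ∧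
          (∀ i < N,
            0 ≤ ∑ n ∈ Finset.range (i+1), (E1 n - p1 n + a2 * d2 n - d1 n) ∧
            0 ≤ ∑ n ∈ Finset.range (i+1), (E2 n - p2 n + a1 * d1 n - d2 n)) ∧
          t = ∑ i ∈ Finset.range N,
            (1/2 * Real.log (1 + h1 * p1 i / s2) + 1/2 * Real.log (1 + h2 * p2 i / s1))} := by
      refine ⟨P1, P2, D1, D2, ?_, ?_, rfl⟩
      · intro i hi
        obtain ⟨hu0, hu1, hv0, hv1, _⟩ := hdd i hi
        have m1 : 0 ≤ a2 * (dd i).2 := mul_nonneg ha20 hv0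
        have m2 : 0 ≤ a1 * (dd i).1 := mul_nonneg ha10 hu0
        refine ⟨?_, ?_, ?_, ?_⟩
        · simp only [hP1, if_pos hi]; linarith
        · simp only [hP2, if_pos hi]; linarith
        · simp only [hD1, if_pos hi]; exact hu0
        · simp only [hD2, if_pos hi]; exact hv0
      · intro i hi
        have hcongr1 : (∑ n ∈ Finset.range (i+1), (E1 n - P1 n + a2 * D2 n - D1 n))
            = ∑ n ∈ Finset.range (i+1), (E1 n - π1 n) := by
          refine Finset.sum_congr rfl fun n hn => ?_
          have hn' : n < N := Nat.lt_of_lt_of_le (Finset.mem_range.1 hn) hi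
          simp only [hP1, hD1, hD2, if_pos hn']
          ring
        have hcongr2 : (∑ n ∈ Finset.range (i+1), (E2 n - P2 n + a1 * D1 n - D2 n))
            = ∑ n ∈ Finset.range (i+1), (E2 n - π2 n) := by
          refine Finset.sum_congr rfl fun n hn => ?_
          have hn' : n < N := Nat.lt_of_lt_of_le (Finset.mem_range.1 hn) hi
          simp only [hP2, hD1, hD2, if_pos hn']
          ring
        obtain ⟨u1, u2⟩ := hπcum i hi
        constructor
        · rw [hcongr1, Finset.sum_sub_distrib]; linarith
        · rw [hcongr2, Finset.sum_sub_distrib]; linarith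
    have hstep : ∀ i ∈ Finset.range N,
        perSlotRate h1 h2 s1 s2 a1 a2 (π1 i) (π2 i)
          ≤ (1/2 * Real.log (1 + h1 * P1 i / s2) + 1/2 * Real.log (1 + h2 * P2 i / s1))
            + ε / N := by
      intro i hi'
      have hi : i < N := Finset.mem_range.1 hi'
      obtain ⟨_, _, _, _, hineq⟩ := hdd i hi
      simp only [hP1, hP2, if_pos hi]
      exact hineq
    have hNε : (N:ℝ) * (ε / N) ≤ ε := by
      by_cases hN : N = 0
      · simp [hN]; linarith
      · have hN' : (N:ℝ) ≠ 0 := Nat.cast_ne_zero.2 hN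
        rw [mul_comm, div_mul_cancel₀ _ hN']
    calc (∑ i ∈ Finset.range N, perSlotRate h1 h2 s1 s2 a1 a2 (π1 i) (π2 i))
        ≤ ∑ i ∈ Finset.range N,
            ((1/2 * Real.log (1 + h1 * P1 i / s2) + 1/2 * Real.log (1 + h2 * P2 i / s1))
              + ε / N) := Finset.sum_le_sum hstep
      _ = (∑ i ∈ Finset.range N,
            (1/2 * Real.log (1 + h1 * P1 i / s2) + 1/2 * Real.log (1 + h2 * P2 i / s1)))
            + N * (ε / N) := by
          rw [Finset.sum_add_distrib, Finset.sum_const, Finset.card_range, nsmul_eq_mul]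
      _ ≤ sSup _ + ε := by
          refine add_le_add ?_ hNε
          refine le_csSup ⟨N * C, ?_⟩ hmemA
          rintro x ⟨p1', p2', d1', d2', hpos', hfeas', rfl⟩
          exact hAbdd p1' p2' d1' d2' hpos' hfeas'
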